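/- Let H0, H* ∈ H^stub_s(d). If M(H0 Δ H*) contains exactly one minimal alternating cycle C*, then the length of C* is at least 4; in particular, C* cannot be an alternating 2-cycle consisting of two parallel edges {a,b}_{H0,t} and {a,b}_{H*,s} with t ≠ s. -/

import Mathlib

open Finset

/-!
Common setting: fix a vertex set `V` and two tail labels `τ, σ`, encoded as
`Bool` with `true = τ` and `false = σ`.  A hyperarc is a pair `(t, {a,b})`
consisting of a tail label and an unordered pair of vertices; it is degenerate
if `a = b`.  A hypergraph is a finite set of pairwise distinct non-degenerate
hyperarcs; `H^stub_s(d)` is the set of such hypergraphs realizing the degree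
sequence `d` (stub degree of each vertex and number of hyperarcs per tail).
`M(H0 Δ H*)` is the edge-labeled multigraph whose edges record the hyperarcs
of the symmetric difference together with the hypergraph (`lab`, `true = H0`)
containing them and their tail.
-/

/-- Tail labels: `true = τ`, `false = σ`. -/
abbrev Tail := Bool

/-- A hyperarc: a tail label together with an unordered pair of vertices. -/
abbrev Hyperarc (V : Type*) := Tail × Sym2 V

/-- A (stub) degree sequence: the stub degree of every vertex together with the
number of hyperarcs carrying each tail label. -/
structure DegreeSeq (V : Type*) where
  vdeg : V → ℕ
  tdeg : Tail → ℕ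

/-- `A` is a hypergraph in `H^stub_s(d)`: a set of pairwise distinct (this is
automatic for a `Finset`) non-degenerate hyperarcs realizing the degree
sequence `D`. -/
def Realizes {V : Type*} [DecidableEq V] (A : Finset (Hyperarc V)) (D : DegreeSeq V) : Prop :=
  (∀ e ∈ A, ¬ e.2.IsDiag) ∧
  (∀ v : V, (A.filter fun e => v ∈ e.2).card = D.vdeg v) ∧
  (∀ t : Tail, (A.filter fun e => e.1 = t).card = D.tdeg t)

/-- An edge `{a,b}_{X,t}` of the multigraph `M(H0 Δ H*)`: its label (`true`
means it comes from `H0`, `false` from `H*`), its tail `t` and its endpoints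
`{a,b}`. -/
structure MEdge (V : Type*) where
  lab : Bool
  tail : Tail
  ends : Sym2 V
deriving DecidableEq

/-- `M⁻¹`: the hyperarc underlying an edge of `M(H0 Δ H*)`. -/
def MEdge.arc {V : Type*} (e : MEdge V) : Hyperarc V := (e.tail, e.ends)

/-- The edge set of the edge-labeled multigraph `M(H0 Δ H*)`: every hyperarc of
`A(H0) \ A(H*)` becomes an edge labeled `H0` (i.e. `true`) and every hyperarc of
`A(H*) \ A(H0)` becomes an edge labeled `H*` (i.e. `false`). -/
def mEdges {V : Type*} [DecidableEq V] (A0 A1 : Finset (Hyperarc V)) : Finset (MEdge V) :=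
  ((A0 \ A1).image fun h => ⟨true, h.1, h.2⟩) ∪
    ((A1 \ A0).image fun h => ⟨false, h.1, h.2⟩)

/-- An alternating cycle in the edge set `E` of `M(H0 Δ H*)`: a closed trail
(cyclic sequence of pairwise distinct edges, consecutive edges sharing an
endpoint) whose edges alternate between label `H0` and label `H*`. -/
structure AltCycle {V : Type*} (E : Finset (MEdge V)) where
  /-- the length of the cycle -/
  n : ℕ
  two_le : 2 ≤ n
  /-- the cyclic sequence of edges -/
  edge : ℕ → MEdge V
  /-- the cyclic sequence of vertices visited -/
  vert : ℕ → V
  edge_periodic : ∀ i, edge (i + n) = edge i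
  vert_periodic : ∀ i, vert (i + n) = vert i
  mem : ∀ i, edge i ∈ E
  inj : ∀ i < n, ∀ j < n, edge i = edge j → i = j
  ends_eq : ∀ i, (edge i).ends = s(vert i, vert (i + 1))
  alt : ∀ i, (edge i).lab = !(edge (i + 1)).lab

/-- The set of edges used by an alternating cycle. -/
def AltCycle.edges {V : Type*} [DecidableEq V] {E : Finset (MEdge V)} (C : AltCycle E) :
    Finset (MEdge V) :=
  (Finset.range C.n).image C.edge

/-- A minimal alternating cycle: one containing no proper alternating subcycle. -/
def AltCycle.Minimal {V : Type*} [DecidableEq V] {E : Finset (MEdge V)} (C : AltCycle E) : Prop :=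
  ∀ C' : AltCycle E, C'.edges ⊆ C.edges → C'.edges = C.edges

/-- `|f_{X,t}(M(H0 Δ H*))|`: the number of edges of `M(H0 Δ H*)` labeled with
hypergraph `l` (`true = H0`) and tail `t`. -/
def labTailCount {V : Type*} [DecidableEq V] (A0 A1 : Finset (Hyperarc V))
    (l : Bool) (t : Tail) : ℕ :=
  ((mEdges A0 A1).filter fun e => e.lab = l ∧ e.tail = t).card

/-- `H` and `H'` differ by a single hypershuffle move, i.e. they are adjacent in
`G(H^stub_s(d))`: their symmetric difference consists of 4 hyperarcs,
`M(H Δ H')` is an alternating cycle, and the number of tail-τ edges labeled `H`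
equals the number of tail-τ edges labeled `H'`. -/
def HypershuffleAdj {V : Type*} [DecidableEq V] (A0 A1 : Finset (Hyperarc V)) : Prop :=
  ((A0 \ A1) ∪ (A1 \ A0)).card = 4 ∧
  (∃ C : AltCycle (mEdges A0 A1), C.edges = mEdges A0 A1) ∧
  labTailCount A0 A1 true true = labTailCount A0 A1 false true


/-!
`M(H0 Δ H*)` is balanced: at every vertex, and for every tail, it has as many `H0`-edges as
`H*`-edges. Alternating cycles have even length, so it suffices to exclude an alternating
2-cycle `C*`. Its two parallel edges have different tails, so tail balance provides an edge
outside `C*`. Removing `C*` keeps every vertex balanced, and in a nonempty balanced loopless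
multigraph a maximal alternating trail can only get stuck where it closes up, so the remaining
edges contain an alternating cycle. That cycle contains a minimal one, which avoids `C*`,
contradicting uniqueness.
-/

namespace MEdge

variable {V : Type*}

def sign (x : MEdge V) : ℤ := if x.lab then 1 else -1

lemma sign_mul_self (x : MEdge V) : x.sign * x.sign = 1 := by
  unfold sign; split <;> norm_num

lemma sign_eq_neg_iff {x y : MEdge V} : x.sign = -y.sign ↔ x.lab = !y.lab := by
  unfold sign; cases x.lab <;> cases y.lab <;> norm_num

lemma sign_eq_sign_of_lab_eq {x y : MEdge V} (h : x.lab = y.lab) : x.sign = y.sign := by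
  rw [sign, sign, h]

end MEdge

lemma sign_eq_mul_neg_one_pow {V : Type*} {e : ℕ → MEdge V} {k : ℕ}
    (halt : ∀ i, i + 1 < k → (e i).lab = !(e (i + 1)).lab) :
    ∀ i < k, (e i).sign = (e 0).sign * (-1) ^ i
  | 0, _ => by simp
  | i + 1, hi => by
    have hstep : (e i).sign = -(e (i + 1)).sign := MEdge.sign_eq_neg_iff.mpr (halt i hi)
    rw [pow_succ, ← mul_assoc, ← sign_eq_mul_neg_one_pow halt i (by omega), hstep]
    ring

lemma exists_lab_eq_not_of_sum_sign_eq_zero {V : Type*} {S : Finset (MEdge V)}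
    (hS : ∑ x ∈ S, x.sign = 0) {x : MEdge V} (hx : x ∈ S) : ∃ y ∈ S, y.lab = !x.lab := by
  by_contra! h
  have hsum : ∑ y ∈ S, y.sign = #S * x.sign := by
    rw [← nsmul_eq_mul, ← sum_const]
    exact sum_congr rfl fun y hy => MEdge.sign_eq_sign_of_lab_eq (by simpa using h y hy)
  rw [hsum] at hS
  rcases mul_eq_zero.mp hS with hcard | hsign
  · exact (card_pos.mpr ⟨x, hx⟩).ne' (by exact_mod_cast hcard)
  · simpa [hsign] using x.sign_mul_self

section SignedDegree

variable {V : Type*} [DecidableEq V]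

def signedDeg (F : Finset (MEdge V)) (w : V) : ℤ :=
  ∑ x ∈ F, if w ∈ x.ends then x.sign else 0

lemma signedDeg_sdiff {F T : Finset (MEdge V)} (h : T ⊆ F) (w : V) :
    signedDeg (F \ T) w = signedDeg F w - signedDeg T w :=
  sum_sdiff_eq_sub h

lemma signedDeg_pair {x y : MEdge V} (hends : x.ends = y.ends) (hlab : x.lab = !y.lab) (w : V) :
    signedDeg {x, y} w = 0 := by
  have hxy : x ≠ y := fun h => by simp [h] at hlab
  rw [signedDeg, sum_pair hxy, hends, MEdge.sign_eq_neg_iff.mpr hlab]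
  split <;> ring

lemma mul_signedDeg_nonneg {G : Finset (MEdge V)} {w : V} {y : MEdge V}
    (h : ∀ x ∈ G, w ∈ x.ends → x.lab = y.lab) : 0 ≤ y.sign * signedDeg G w := by
  rw [signedDeg, mul_sum]
  refine sum_nonneg fun x hx => ?_
  split
  · rw [MEdge.sign_eq_sign_of_lab_eq (h x hx ‹_›), y.sign_mul_self]; norm_num
  · simp

end SignedDegree

structure AltTrail {V : Type*} (F : Finset (MEdge V)) where
  k : ℕ
  pos : 0 < k
  edge : ℕ → MEdge V
  vert : ℕ → V
  mem : ∀ i < k, edge i ∈ F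
  inj : ∀ i < k, ∀ j < k, edge i = edge j → i = j
  ends_eq : ∀ i < k, (edge i).ends = s(vert i, vert (i + 1))
  alt : ∀ i, i + 1 < k → (edge i).lab = !(edge (i + 1)).lab

namespace AltTrail

variable {V : Type*} {F : Finset (MEdge V)}

def Closed (tr : AltTrail F) : Prop :=
  tr.vert tr.k = tr.vert 0 ∧ (tr.edge (tr.k - 1)).lab = !(tr.edge 0).lab

lemma sign_edge (tr : AltTrail F) {i : ℕ} (hi : i < tr.k) :
    (tr.edge i).sign = (tr.edge 0).sign * (-1) ^ i :=
  sign_eq_mul_neg_one_pow tr.alt i hi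

lemma Closed.two_le {tr : AltTrail F} (hc : tr.Closed) : 2 ≤ tr.k := by
  by_contra! h
  have hk : tr.k - 1 = 0 := by omega
  simpa [hk] using hc.2

def single {x : MEdge V} (hx : x ∈ F) {a b : V} (hab : x.ends = s(a, b)) : AltTrail F where
  k := 1
  pos := one_pos
  edge _ := x
  vert i := if i = 0 then a else b
  mem _ _ := hx
  inj _ _ _ _ _ := by omega
  ends_eq i hi := by
    obtain rfl : i = 0 := by omega
    simpa using hab
  alt _ _ := by omega

def Closed.toAltCycle {tr : AltTrail F} (hc : tr.Closed) {E : Finset (MEdge V)} (hFE : F ⊆ E) :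
    AltCycle E where
  n := tr.k
  two_le := hc.two_le
  edge i := tr.edge (i % tr.k)
  vert i := tr.vert (i % tr.k)
  edge_periodic i := by rw [Nat.add_mod_right]
  vert_periodic i := by rw [Nat.add_mod_right]
  mem i := hFE (tr.mem _ (Nat.mod_lt _ tr.pos))
  inj i hi j hj h := by
    rw [Nat.mod_eq_of_lt hi, Nat.mod_eq_of_lt hj] at h
    exact tr.inj i hi j hj h
  ends_eq i := by
    have hi := Nat.mod_lt i tr.pos
    rw [tr.ends_eq _ hi, Nat.add_mod, Nat.mod_eq_of_lt (show 1 < tr.k from hc.two_le)]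
    by_cases h : i % tr.k + 1 = tr.k
    · rw [h, Nat.mod_self, hc.1]
    · rw [Nat.mod_eq_of_lt (show i % tr.k + 1 < tr.k by omega)]
  alt i := by
    have hi := Nat.mod_lt i tr.pos
    rw [Nat.add_mod, Nat.mod_eq_of_lt (show 1 < tr.k from hc.two_le)]
    by_cases h : i % tr.k + 1 = tr.k
    · rw [h, Nat.mod_self, show i % tr.k = tr.k - 1 by omega, hc.2]
    · rw [Nat.mod_eq_of_lt (show i % tr.k + 1 < tr.k by omega)]
      exact tr.alt _ (by omega)

variable [DecidableEq V]

def edges (tr : AltTrail F) : Finset (MEdge V) := (range tr.k).image tr.edge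

lemma edges_subset (tr : AltTrail F) : tr.edges ⊆ F := by
  simp only [edges, image_subset_iff, mem_range]
  exact tr.mem

lemma card_edges (tr : AltTrail F) : #tr.edges = tr.k := by
  rw [edges, card_image_of_injOn, card_range]
  exact fun i hi j hj => tr.inj i (by simpa using hi) j (by simpa using hj)

lemma k_le_card (tr : AltTrail F) : tr.k ≤ #F :=
  tr.card_edges ▸ card_le_card tr.edges_subset

/-- Telescoping: edge `i` contributes `g i - g (i + 1)`, because its endpoints are distinct and
the signs alternate. -/
lemma signedDeg_edges (tr : AltTrail F) (hnd : ∀ x ∈ F, ¬ x.ends.IsDiag) (w : V) :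
    signedDeg tr.edges w = (if w = tr.vert 0 then (tr.edge 0).sign else 0) -
      (if w = tr.vert tr.k then (tr.edge 0).sign * (-1) ^ tr.k else 0) := by
  set g : ℕ → ℤ := fun j => if w = tr.vert j then (tr.edge 0).sign * (-1) ^ j else 0
  have hg0 : g 0 = if w = tr.vert 0 then (tr.edge 0).sign else 0 := by simp [g]
  rw [← hg0, signedDeg, edges, sum_image fun i hi j hj => tr.inj i (by simpa using hi) j
    (by simpa using hj), ← sum_range_sub' g]
  refine sum_congr rfl fun i hi => ?_
  have hi : i < tr.k := mem_range.mp hi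
  have hne : tr.vert i ≠ tr.vert (i + 1) := by
    simpa [tr.ends_eq i hi] using hnd _ (tr.mem i hi)
  simp only [g, tr.ends_eq i hi, tr.sign_edge hi, Sym2.mem_iff, pow_succ]
  by_cases h₁ : w = tr.vert i <;> by_cases h₂ : w = tr.vert (i + 1)
  · exact absurd (h₁.symm.trans h₂) hne
  all_goals simp [h₁, h₂, hne, hne.symm]

/-- If every unused edge at the end of the trail had the label of the last edge, the balance of
`F` at `vert k`, minus the telescoped contribution of the trail, would force the trail to be back
at its start with the opposite label, i.e. closed. -/
lemma exists_extension (tr : AltTrail F) (hbal : ∀ w, signedDeg F w = 0)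
    (hnd : ∀ x ∈ F, ¬ x.ends.IsDiag) (hopen : ¬ tr.Closed) :
    ∃ x ∈ F \ tr.edges, (tr.edge (tr.k - 1)).lab = !x.lab ∧ tr.vert tr.k ∈ x.ends := by
  by_contra! hstuck
  obtain ⟨m, hm⟩ : ∃ m, tr.k = m + 1 := ⟨tr.k - 1, by have := tr.pos; omega⟩
  rw [hm, Nat.add_sub_cancel] at hstuck
  have hlast : ∀ x ∈ F \ tr.edges, tr.vert tr.k ∈ x.ends → x.lab = (tr.edge m).lab :=
    fun x hx hw => by
      by_contra hne
      exact hstuck x hx (Bool.eq_not_iff.mpr (Ne.symm hne)) (hm ▸ hw)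
  have hnonneg := mul_signedDeg_nonneg hlast
  rw [signedDeg_sdiff tr.edges_subset, hbal, tr.signedDeg_edges hnd, if_pos rfl, hm,
    tr.sign_edge (show m < tr.k by omega), pow_succ] at hnonneg
  have hs := (tr.edge 0).sign_mul_self
  rcases neg_one_pow_eq_or ℤ m with hp | hp <;> rw [hp] at hnonneg
  · split at hnonneg <;> nlinarith
  · refine hopen ⟨?_, ?_⟩
    · by_contra hv
      rw [if_neg (hm ▸ hv)] at hnonneg
      nlinarith
    · rw [hm, Nat.add_sub_cancel, ← MEdge.sign_eq_neg_iff, tr.sign_edge (by omega), hp]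
      ring

def snoc (tr : AltTrail F) {x : MEdge V} (hx : x ∈ F \ tr.edges)
    (hlab : (tr.edge (tr.k - 1)).lab = !x.lab) {w : V} (hw : x.ends = s(tr.vert tr.k, w)) :
    AltTrail F where
  k := tr.k + 1
  pos := by omega
  edge i := if i = tr.k then x else tr.edge i
  vert i := if i = tr.k + 1 then w else tr.vert i
  mem i hi := by
    split
    · exact (mem_sdiff.mp hx).1
    · exact tr.mem i (by omega)
  inj i hi j hj h := by
    have hnew : ∀ l < tr.k, tr.edge l ≠ x := fun l hl hl' =>
      (mem_sdiff.mp hx).2 (mem_image.mpr ⟨l, mem_range.mpr hl, hl'⟩)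
    split at h <;> split at h
    · omega
    · exact absurd h.symm (hnew j (by omega))
    · exact absurd h (hnew i (by omega))
    · exact tr.inj i (by omega) j (by omega) h
  ends_eq i hi := by
    by_cases h : i = tr.k
    · subst h; simpa using hw
    · simpa [h, show i ≠ tr.k + 1 by omega, show i + 1 ≠ tr.k + 1 by omega]
        using tr.ends_eq i (by omega)
  alt i hi := by
    by_cases h : i + 1 = tr.k
    · rw [if_neg (by omega), if_pos h, show i = tr.k - 1 by omega]
      exact hlab
    · simpa [h, show i ≠ tr.k by omega] using tr.alt i (by omega)

theorem exists_closed (hbal : ∀ w, signedDeg F w = 0) (hnd : ∀ x ∈ F, ¬ x.ends.IsDiag)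
    (tr : AltTrail F) : ∃ tr' : AltTrail F, tr'.Closed := by
  by_cases hc : tr.Closed
  · exact ⟨tr, hc⟩
  obtain ⟨x, hx, hlab, hmem⟩ := tr.exists_extension hbal hnd hc
  obtain ⟨w, hw⟩ := Sym2.mem_iff_exists.mp hmem
  have hk := (tr.snoc hx hlab hw).k_le_card
  exact (tr.snoc hx hlab hw).exists_closed hbal hnd
termination_by #F - tr.k
decreasing_by exact Nat.sub_lt_sub_left hk (Nat.lt_succ_self _)

lemma Closed.toAltCycle_edges {tr : AltTrail F} (hc : tr.Closed) {E : Finset (MEdge V)}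
    (hFE : F ⊆ E) : (hc.toAltCycle hFE).edges ⊆ F := by
  simp only [AltCycle.edges, image_subset_iff]
  exact fun i _ => tr.mem _ (Nat.mod_lt _ tr.pos)

end AltTrail

theorem exists_altCycle_subset {V : Type*} [DecidableEq V] {E F : Finset (MEdge V)}
    (hFE : F ⊆ E) (hF : F.Nonempty) (hbal : ∀ w, signedDeg F w = 0)
    (hnd : ∀ x ∈ F, ¬ x.ends.IsDiag) : ∃ C : AltCycle E, C.edges ⊆ F := by
  obtain ⟨x, hx⟩ := hF
  obtain ⟨⟨a, b⟩, hab⟩ := Quot.exists_rep x.ends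
  obtain ⟨tr, hc⟩ := (AltTrail.single hx hab.symm).exists_closed hbal hnd
  exact ⟨hc.toAltCycle hFE, hc.toAltCycle_edges hFE⟩

namespace AltCycle

variable {V : Type*} [DecidableEq V] {E : Finset (MEdge V)}

lemma edges_subset (C : AltCycle E) : C.edges ⊆ E := by
  simp only [edges, image_subset_iff]
  exact fun i _ => C.mem i

lemma edges_nonempty (C : AltCycle E) : C.edges.Nonempty :=
  ⟨C.edge 0, mem_image_of_mem _ (mem_range.mpr (by have := C.two_le; omega))⟩

lemma card_edges (C : AltCycle E) : #C.edges = C.n := by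
  rw [edges, card_image_of_injOn, card_range]
  exact fun i hi j hj => C.inj i (by simpa using hi) j (by simpa using hj)

omit [DecidableEq V] in
lemma even_n (C : AltCycle E) : Even C.n := by
  have h := sign_eq_mul_neg_one_pow (k := C.n + 1) (fun i _ => C.alt i) C.n (by omega)
  rw [← zero_add C.n, C.edge_periodic, zero_add] at h
  have hs := (C.edge 0).sign_mul_self
  have hp : ((-1 : ℤ) ^ C.n) = 1 := by
    linear_combination (-(C.edge 0).sign) * h - ((-1) ^ C.n - 1) * hs
  exact (neg_one_pow_eq_one_iff_even (by norm_num)).mp hp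

theorem exists_minimal_subset (C : AltCycle E) :
    ∃ C' : AltCycle E, C'.Minimal ∧ C'.edges ⊆ C.edges := by
  by_cases hC : C.Minimal
  · exact ⟨C, hC, subset_rfl⟩
  obtain ⟨C₂, hsub, hne⟩ : ∃ C₂ : AltCycle E, C₂.edges ⊆ C.edges ∧ C₂.edges ≠ C.edges := by
    simpa [Minimal] using hC
  have hlt := card_lt_card (ssubset_of_subset_of_ne hsub hne)
  obtain ⟨C', hC', hsub'⟩ := C₂.exists_minimal_subset
  exact ⟨C', hC', hsub'.trans hsub⟩
termination_by #C.edges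

lemma edges_subset_of_forall_minimal_eq (C : AltCycle E)
    (huniq : ∀ C' : AltCycle E, C'.Minimal → C'.edges = C.edges) (C₁ : AltCycle E) :
    C.edges ⊆ C₁.edges := by
  obtain ⟨C', hC', hsub⟩ := C₁.exists_minimal_subset
  exact huniq C' hC' ▸ hsub

lemma edges_eq_pair_of_n_eq_two (C : AltCycle E) (hn : C.n = 2) :
    C.edges = {C.edge 0, C.edge 1} := by
  simp [edges, hn, range_add_one, image_insert, pair_comm]

omit [DecidableEq V] in
lemma ends_one_eq_of_n_eq_two (C : AltCycle E) (hn : C.n = 2) :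
    (C.edge 1).ends = (C.edge 0).ends := by
  have h := C.vert_periodic 0
  rw [zero_add, hn] at h
  rw [C.ends_eq 0, C.ends_eq 1, h, Sym2.eq_swap]

end AltCycle

section SymmDiffMultigraph

variable {V : Type*} [DecidableEq V] {A0 A1 : Finset (Hyperarc V)}

lemma mem_mEdges {x : MEdge V} :
    x ∈ mEdges A0 A1 ↔ (x.lab = true ∧ x.arc ∈ A0 \ A1) ∨ (x.lab = false ∧ x.arc ∈ A1 \ A0) := by
  obtain ⟨l, t, z⟩ := x
  cases l <;> simp [mEdges, MEdge.arc]

lemma arc_injOn_mEdges : Set.InjOn MEdge.arc (mEdges A0 A1 : Set (MEdge V)) := by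
  rintro ⟨l, t, z⟩ hx ⟨l', t', z'⟩ hy h
  simp only [MEdge.arc, Prod.mk.injEq] at h
  obtain ⟨rfl, rfl⟩ := h
  cases l <;> cases l' <;> simp_all [mem_mEdges, MEdge.arc]

lemma sum_sign_mEdges (q : Hyperarc V → Prop) [DecidablePred q] :
    ∑ x ∈ mEdges A0 A1, (if q x.arc then x.sign else 0) = (#(A0.filter q) : ℤ) - #(A1.filter q) := by
  have hinj (l : Bool) : Function.Injective fun h : Hyperarc V => (⟨l, h.1, h.2⟩ : MEdge V) :=
    fun h h' hh => by simpa [Prod.ext_iff] using hh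
  rw [mEdges, sum_union, sum_image fun h _ h' _ hh => hinj true hh,
    sum_image fun h _ h' _ hh => hinj false hh]
  · have := sum_sdiff_sub_sum_sdiff (s₁ := A1) (s₂ := A0) (f := fun h => if q h then (1 : ℤ) else 0)
    simp only [sum_boole] at this
    simp [MEdge.arc, MEdge.sign, ← this, sum_boole, sub_eq_add_neg, ← sum_filter]
  · refine disjoint_left.mpr fun x hx hx' => ?_
    obtain ⟨_, -, rfl⟩ := mem_image.mp hx
    obtain ⟨_, -, h⟩ := mem_image.mp hx'
    simp at h

variable {D : DegreeSeq V}

lemma not_isDiag_of_mem_mEdges (h0 : Realizes A0 D) (h1 : Realizes A1 D) {x : MEdge V}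
    (hx : x ∈ mEdges A0 A1) : ¬ x.ends.IsDiag := by
  rcases mem_mEdges.mp hx with ⟨-, hx⟩ | ⟨-, hx⟩
  · exact h0.1 _ (mem_sdiff.mp hx).1
  · exact h1.1 _ (mem_sdiff.mp hx).1

lemma signedDeg_mEdges (h0 : Realizes A0 D) (h1 : Realizes A1 D) (w : V) :
    signedDeg (mEdges A0 A1) w = 0 := by
  have h := sum_sign_mEdges (A0 := A0) (A1 := A1) (w ∈ ·.2)
  rwa [h0.2.1, h1.2.1, sub_self] at h

lemma exists_tail_eq_lab_eq_not (h0 : Realizes A0 D) (h1 : Realizes A1 D) {x : MEdge V}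
    (hx : x ∈ mEdges A0 A1) : ∃ y ∈ mEdges A0 A1, y.tail = x.tail ∧ y.lab = !x.lab := by
  have hsum : ∑ y ∈ mEdges A0 A1 with y.tail = x.tail, y.sign = 0 := by
    have h := sum_sign_mEdges (A0 := A0) (A1 := A1) (·.1 = x.tail)
    rwa [h0.2.2, h1.2.2, sub_self, ← sum_filter] at h
  obtain ⟨y, hy, hlab⟩ := exists_lab_eq_not_of_sum_sign_eq_zero hsum (mem_filter.mpr ⟨hx, rfl⟩)
  exact ⟨y, (mem_filter.mp hy).1, (mem_filter.mp hy).2, hlab⟩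

end SymmDiffMultigraph

namespace AltCycle

variable {V : Type*} [DecidableEq V] {D : DegreeSeq V} {A0 A1 : Finset (Hyperarc V)}

/-- The two parallel edges of an alternating 2-cycle carry different tails (otherwise they would
be one hyperarc lying in both `H0 \ H*` and `H* \ H0`), so tail balance provides a further edge. -/
lemma sdiff_edges_nonempty_of_n_eq_two (h0 : Realizes A0 D) (h1 : Realizes A1 D)
    (C : AltCycle (mEdges A0 A1)) (hn : C.n = 2) : (mEdges A0 A1 \ C.edges).Nonempty := by
  have htail : (C.edge 0).tail ≠ (C.edge 1).tail := fun h => by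
    have := arc_injOn_mEdges (C.mem 0) (C.mem 1)
      (Prod.ext h (C.ends_one_eq_of_n_eq_two hn).symm)
    exact absurd (C.inj 0 (by omega) 1 (by omega) this) (by norm_num)
  obtain ⟨y, hy, hyt, hyl⟩ := exists_tail_eq_lab_eq_not h0 h1 (C.mem 0)
  refine ⟨y, mem_sdiff.mpr ⟨hy, ?_⟩⟩
  rw [C.edges_eq_pair_of_n_eq_two hn, mem_insert, mem_singleton]
  rintro (rfl | rfl)
  · simp at hyl
  · exact htail hyt.symm

theorem n_ne_two_of_forall_minimal_eq (h0 : Realizes A0 D) (h1 : Realizes A1 D)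
    (C : AltCycle (mEdges A0 A1))
    (huniq : ∀ C' : AltCycle (mEdges A0 A1), C'.Minimal → C'.edges = C.edges) : C.n ≠ 2 := by
  intro hn
  have hbal (w : V) : signedDeg (mEdges A0 A1 \ C.edges) w = 0 := by
    rw [signedDeg_sdiff C.edges_subset, signedDeg_mEdges h0 h1, C.edges_eq_pair_of_n_eq_two hn,
      signedDeg_pair (C.ends_one_eq_of_n_eq_two hn).symm (C.alt 0), sub_self]
  obtain ⟨C₁, hC₁⟩ := exists_altCycle_subset sdiff_subset
    (C.sdiff_edges_nonempty_of_n_eq_two h0 h1 hn) hbal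
    fun x hx => not_isDiag_of_mem_mEdges h0 h1 (mem_sdiff.mp hx).1
  obtain ⟨x, hx⟩ := C.edges_nonempty
  exact (mem_sdiff.mp (hC₁ (C.edges_subset_of_forall_minimal_eq huniq C₁ hx))).2 hx

end AltCycle

theorem min_cycle_length_ge_four_general {V : Type*} [DecidableEq V]
    (D : DegreeSeq V) (A0 A1 : Finset (Hyperarc V))
    (h0 : Realizes A0 D) (h1 : Realizes A1 D)
    (C : AltCycle (mEdges A0 A1))
    (huniq : ∀ C' : AltCycle (mEdges A0 A1), C'.Minimal → C'.edges = C.edges) :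
    4 ≤ C.n ∧
      ∀ (a b : V) (t s : Tail), t ≠ s →
        C.edges ≠ {⟨true, t, s(a, b)⟩, ⟨false, s, s(a, b)⟩} := by
  have hn : C.n ≠ 2 := C.n_ne_two_of_forall_minimal_eq h0 h1 huniq
  refine ⟨?_, fun a b t s _ hC => hn ?_⟩
  · obtain ⟨m, hm⟩ := C.even_n
    have := C.two_le
    omega
  · rw [← C.card_edges, hC, card_pair (by simp)]

/-- If `M(H0 Δ H*)` contains exactly one minimal alternating cycle `C*`, then
`|C*| ≥ 4`; in particular `C*` is not an alternating 2-cycle made of two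
parallel edges `{a,b}_{H0,t}` and `{a,b}_{H*,s}` with `t ≠ s`. -/
theorem min_cycle_length_ge_four {V : Type*} [DecidableEq V]
    (D : DegreeSeq V) (A0 A1 : Finset (Hyperarc V))
    (h0 : Realizes A0 D) (h1 : Realizes A1 D)
    (C : AltCycle (mEdges A0 A1)) (hmin : C.Minimal)
    (huniq : ∀ C' : AltCycle (mEdges A0 A1), C'.Minimal → C'.edges = C.edges) :
    4 ≤ C.n ∧
      ∀ (a b : V) (t s : Tail), t ≠ s →
        C.edges ≠ {⟨true, t, s(a, b)⟩, ⟨false, s, s(a, b)⟩} :=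
  min_cycle_length_ge_four_general D A0 A1 h0 h1 C huniq
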